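/- Let f: Γ → Σ be a bundle scenario and p an empirical model on f. Then the family ĤNp defined by (ĤNp)_τ(κ) := p_{μ_Σ(τ)}(μ_Γ(κ)) for τ ∈ ĤNΣ and κ ∈ (ĤNf)⁻¹(τ) is a well-defined empirical model on the bundle scenario ĤNf: ĤNΓ → ĤNΣ; that is, each (ĤNp)_τ is a distribution in D_R((ĤNf)⁻¹(τ)) and (ĤNp)_τ|_{τ'} = (ĤNp)_{τ'} whenever τ' ⊆ τ in ĤNΣ. -/

import Mathlib

universe u v w t

namespace Ctx

/-- An abstract simplicial complex on the vertex type `V`: a collection of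
nonempty finite subsets of `V` (the simplices/faces), closed under passing to
nonempty subsets, and containing every singleton (so that `V` is exactly the
vertex set). -/
structure SComplex (V : Type u) where
  faces : Set (Set V)
  finite_mem : ∀ σ ∈ faces, Set.Finite σ
  nonempty_mem : ∀ σ ∈ faces, Set.Nonempty σ
  down_closed : ∀ ⦃σ⦄, σ ∈ faces → ∀ ⦃τ⦄, τ ⊆ σ → τ.Nonempty → τ ∈ faces
  singleton_mem : ∀ x : V, {x} ∈ faces

namespace SComplex

variable {V : Type u} {W : Type v} {V' : Type w} {V'' : Type t}

/-- A map of simplicial complexes: a function on vertices carrying every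
simplex (elementwise image) to a simplex. -/
@[ext]
structure Map (Γ : SComplex V) (K : SComplex W) where
  toFun : V → W
  map_faces : ∀ ⦃σ⦄, σ ∈ Γ.faces → toFun '' σ ∈ K.faces

variable {Γ : SComplex V} {K : SComplex W} {K' : SComplex V'}

/-- The identity simplicial complex map. -/
protected def Map.id (K : SComplex V) : Map K K :=
  ⟨fun x => x, fun σ h => by simpa using h⟩

/-- Composition of simplicial complex maps. -/
def Map.comp {L : SComplex V'} (g : Map K L) (f : Map Γ K) : Map Γ L :=
  ⟨g.toFun ∘ f.toFun, fun σ h => by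
    rw [Set.image_comp]; exact g.map_faces (f.map_faces h)⟩

/-- The star of a simplex: all simplices containing it. -/
def star (K : SComplex V) (σ : Set V) : Set (Set V) := {τ | τ ∈ K.faces ∧ σ ⊆ τ}

/-- Surjectivity: every simplex of the target is an image of a simplex. -/
def Map.Surj (f : Map Γ K) : Prop := ∀ σ ∈ K.faces, ∃ γ ∈ Γ.faces, f.toFun '' γ = σ

/-- Local surjectivity: stars surject onto stars. -/
def Map.LocSurj (f : Map Γ K) : Prop :=
  ∀ γ ∈ Γ.faces, ∀ τ ∈ K.star (f.toFun '' γ), ∃ γ' ∈ Γ.star γ, f.toFun '' γ' = τ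

/-- Discreteness over vertices: no edge between distinct vertices with the
same image. -/
def Map.DiscV (f : Map Γ K) : Prop :=
  ∀ x y : V, x ≠ y → f.toFun x = f.toFun y → ({x, y} : Set V) ∉ Γ.faces

/-- A bundle scenario: a surjective, locally surjective simplicial complex map
that is discrete over vertices. -/
def Map.IsBundle (f : Map Γ K) : Prop := f.Surj ∧ f.LocSurj ∧ f.DiscV

/-- `f` has the right lifting property with respect to `g`. -/
def RLP {A : Type*} {B : Type*} {CA : SComplex A} {CB : SComplex B}
    (g : Map CA CB) (f : Map Γ K) : Prop :=
  ∀ (u : Map CA Γ) (v : Map CB K), f.comp u = v.comp g →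
    ∃ h : Map CB Γ, h.comp g = u ∧ f.comp h = v

/-- The full simplicial complex `Δ^n` on `{0, …, n}`. -/
def deltaC (n : ℕ) : SComplex (Fin (n + 1)) where
  faces := {σ | σ.Nonempty}
  finite_mem := fun σ _ => σ.toFinite
  nonempty_mem := fun _ h => h
  down_closed := fun _ _ _ _ h => h
  singleton_mem := fun x => Set.singleton_nonempty x

/-- The simplicial complex map `Δ^m → Δ^n` induced by a function
`{0,…,m} → {0,…,n}`. -/
def deltaMap {m n : ℕ} (θ : Fin (m + 1) → Fin (n + 1)) : Map (deltaC m) (deltaC n) :=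
  ⟨θ, fun _ h => h.image θ⟩

/-- The empty simplicial complex. -/
def emptyC : SComplex Empty where
  faces := ∅
  finite_mem := fun _ h => h.elim
  nonempty_mem := fun _ h => h.elim
  down_closed := fun _ h => h.elim
  singleton_mem := fun x => x.elim

/-- The inclusion of the empty simplicial complex into `Δ^n`. -/
def emptyToDelta (n : ℕ) : Map emptyC (deltaC n) :=
  ⟨fun x => x.elim, fun _ h => h.elim⟩

/-- The type of faces of a simplicial complex. -/
abbrev Face (K : SComplex V) : Type u := {σ : Set V // σ ∈ K.faces}

/-- The nerve complex `ĤN K`: vertices are the simplices of `K`, and a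
nonempty finite set of simplices is a face iff its union is a face of `K`. -/
def nerveC (K : SComplex V) : SComplex K.Face where
  faces := {τ | τ.Finite ∧ τ.Nonempty ∧ (⋃ σ ∈ τ, (σ : Set V)) ∈ K.faces}
  finite_mem := fun _ h => h.1
  nonempty_mem := fun _ h => h.2.1
  down_closed := by
    intro τ h τ' hsub hne
    refine ⟨h.1.subset hsub, hne, K.down_closed h.2.2 ?_ ?_⟩
    · exact Set.biUnion_subset_biUnion_left hsub
    · obtain ⟨σ, hσ⟩ := hne
      obtain ⟨x, hx⟩ := K.nonempty_mem σ.1 σ.2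
      exact ⟨x, Set.mem_biUnion hσ hx⟩
  singleton_mem := fun σ => ⟨Set.finite_singleton σ, Set.singleton_nonempty σ, by
    simpa using σ.2⟩

/-- The map `ĤN f` induced on nerve complexes. -/
def nerveMap (f : Map Γ K) : Map (nerveC Γ) (nerveC K) where
  toFun γ := ⟨f.toFun '' γ.1, f.map_faces γ.2⟩
  map_faces := by
    intro τ hτ
    refine ⟨hτ.1.image _, hτ.2.1.image _, ?_⟩
    have h : (⋃ σ ∈ (fun γ : Γ.Face => (⟨f.toFun '' γ.1, f.map_faces γ.2⟩ : K.Face)) '' τ,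
        (σ : Set W)) = f.toFun '' (⋃ σ ∈ τ, (σ : Set V)) := by
      rw [Set.biUnion_image, Set.image_iUnion₂]
    exact Set.mem_of_eq_of_mem h (f.map_faces hτ.2.2)

/-- The unit `δ : K → ĤN K`, sending a vertex to the singleton simplex. -/
def deltaHat (K : SComplex V) : Map K (nerveC K) where
  toFun x := ⟨{x}, K.singleton_mem x⟩
  map_faces := by
    intro σ hσ
    refine ⟨(K.finite_mem σ hσ).image _, (K.nonempty_mem σ hσ).image _, ?_⟩
    have h : (⋃ τ ∈ (fun x : V => (⟨{x}, K.singleton_mem x⟩ : K.Face)) '' σ,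
        (τ : Set V)) = σ := by
      rw [Set.biUnion_image]
      exact Set.biUnion_of_singleton σ
    exact Set.mem_of_eq_of_mem h hσ

/-- The multiplication `μ : ĤN (ĤN K) → ĤN K` of the nerve complex monad,
sending a set of simplices to its union. -/
def muMap (K : SComplex V) : Map (nerveC (nerveC K)) (nerveC K) where
  toFun τ := ⟨⋃ σ ∈ τ.1, (σ : Set V), τ.2.2.2⟩
  map_faces := by
    intro T hT
    refine ⟨hT.1.image _, hT.2.1.image _, ?_⟩
    have h : (⋃ σ ∈ (fun τ : (nerveC K).Face =>
          (⟨⋃ σ ∈ τ.1, (σ : Set V), τ.2.2.2⟩ : K.Face)) '' T, (σ : Set V))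
        = ⋃ σ ∈ (⋃ τ ∈ T, (τ : Set K.Face)), (σ : Set V) := by
      rw [Set.biUnion_image]
      ext x
      simp only [Set.mem_iUnion, Set.mem_setOf_eq]
      tauto
    exact Set.mem_of_eq_of_mem h hT.2.2.2.2

/-- The vertex type of the pull-back of `f : Γ → K` along `π : K' → K`. -/
def PB {Γ : SComplex V} {K : SComplex W} {K' : SComplex V'} (f : Map Γ K) (π : Map K' K) :
    Type (max u w) :=
  {q : V × V' // f.toFun q.1 = π.toFun q.2}

/-- The pull-back of `f : Γ → K` along `π : K' → K`: vertices are pairs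
`(x, y)` with `f x = π y`, and a set of pairs is a simplex iff both coordinate
projections are simplices. -/
def pullback {Γ : SComplex V} {K : SComplex W} {K' : SComplex V'} (f : Map Γ K) (π : Map K' K) :
    SComplex (PB f π) where
  faces := {τ | ((fun q : PB f π => q.1.1) '' τ) ∈ Γ.faces ∧
    ((fun q : PB f π => q.1.2) '' τ) ∈ K'.faces}
  finite_mem := by
    intro τ h
    have h1 : (Subtype.val '' τ).Finite := by
      refine Set.Finite.subset (Set.Finite.prod (Γ.finite_mem _ h.1) (K'.finite_mem _ h.2)) ?_
      rintro q ⟨r, hr, rfl⟩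
      exact ⟨⟨r, hr, rfl⟩, ⟨r, hr, rfl⟩⟩
    exact Set.Finite.of_finite_image h1 Subtype.val_injective.injOn
  nonempty_mem := fun τ h => Set.Nonempty.of_image (Γ.nonempty_mem _ h.1)
  down_closed := fun τ h τ' hsub hne =>
    ⟨Γ.down_closed h.1 (Set.image_mono hsub) (hne.image _),
     K'.down_closed h.2 (Set.image_mono hsub) (hne.image _)⟩
  singleton_mem := fun q => by
    constructor
    · simpa using Γ.singleton_mem q.1.1
    · simpa using K'.singleton_mem q.1.2

/-- First projection of the pull-back. -/
def pbFst {Γ : SComplex V} {K : SComplex W} {K' : SComplex V'} (f : Map Γ K) (π : Map K' K) :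
    Map (pullback f π) Γ :=
  ⟨fun q => q.1.1, fun _ h => h.1⟩

/-- Second projection of the pull-back (the pulled-back bundle). -/
def pbSnd {Γ : SComplex V} {K : SComplex W} {K' : SComplex V'} (f : Map Γ K) (π : Map K' K) :
    Map (pullback f π) K' :=
  ⟨fun q => q.1.2, fun _ h => h.2⟩

/-- The event complex `E_O K` of a scenario `(K, O)`: vertices are pairs
`(x, o)` with `o ∈ O x`, and simplices are graphs of outcome assignments over
simplices of `K`. -/
def eventComplex (K : SComplex V) (O : V → Type v) : SComplex ((x : V) × O x) where
  faces := {τ | (Sigma.fst '' τ) ∈ K.faces ∧ Set.InjOn Sigma.fst τ}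
  finite_mem := fun _ h => Set.Finite.of_finite_image (K.finite_mem _ h.1) h.2
  nonempty_mem := fun _ h => Set.Nonempty.of_image (K.nonempty_mem _ h.1)
  down_closed := fun τ h τ' hsub hne =>
    ⟨K.down_closed h.1 (Set.image_mono hsub) (hne.image _), h.2.mono hsub⟩
  singleton_mem := fun p => ⟨by simpa using K.singleton_mem p.1, Set.injOn_singleton _ _⟩

/-- The canonical projection `E_O K → K` of a scenario. -/
def eventProj (K : SComplex V) (O : V → Type v) : Map (eventComplex K O) K :=
  ⟨Sigma.fst, fun _ h => h.1⟩

end SComplex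

open SComplex

/-- `R`-distributions on a set `U`: finitely supported `R`-valued functions
summing to `1`. -/
def Dist (R : Type u) [CommSemiring R] (U : Type v) : Type (max u v) :=
  {p : U →₀ R // p.sum (fun _ r => r) = 1}

/-- Push-forward of distributions along a function. -/
noncomputable def Dist.map {R : Type u} [CommSemiring R] {U : Type v} {U' : Type w} (g : U → U')
    (p : Dist R U) : Dist R U' :=
  ⟨Finsupp.mapDomain g p.1, by
    rw [Finsupp.sum_mapDomain_index (fun _ => rfl) (fun _ _ _ => rfl)]
    exact p.2⟩

/-- The Dirac distribution at a point. -/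
noncomputable def Dist.pure {R : Type u} [CommSemiring R] {U : Type v} (u : U) : Dist R U :=
  ⟨Finsupp.single u 1, by rw [Finsupp.sum_single_index rfl]⟩

namespace SComplex

/-- The fiber of a simplicial complex map over a simplex of the target. -/
abbrev Map.fiber {Γ : SComplex V} {K : SComplex W} (f : Map Γ K) (σ : Set W) : Type u :=
  {γ : Set V // γ ∈ Γ.faces ∧ f.toFun '' γ = σ}

/-- The restriction map between fibers, sending `γ` over `σ` to the
subsimplex of `γ` lying over `σ' ⊆ σ`.  (For bundle scenarios this is the
unique such subsimplex.) -/
def Map.resFiber {Γ : SComplex V} {K : SComplex W} (f : Map Γ K) {σ σ' : Set W}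
    (hσ' : σ' ∈ K.faces) (h : σ' ⊆ σ) (γ : f.fiber σ) : f.fiber σ' := by
  have hne : ({y | y ∈ γ.1 ∧ f.toFun y ∈ σ'} : Set V).Nonempty := by
    obtain ⟨x, hx⟩ := K.nonempty_mem σ' hσ'
    have hx' : x ∈ f.toFun '' γ.1 := (Set.ext_iff.mp γ.2.2 x).mpr (h hx)
    obtain ⟨y, hy, rfl⟩ := hx'
    exact ⟨y, hy, hx⟩
  refine ⟨{y | y ∈ γ.1 ∧ f.toFun y ∈ σ'},
    Γ.down_closed γ.2.1 (fun y hy => hy.1) hne, ?_⟩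
  ext x
  constructor
  · rintro ⟨y, ⟨hy, hfy⟩, rfl⟩
    exact hfy
  · intro hx
    have hx' : x ∈ f.toFun '' γ.1 := (Set.ext_iff.mp γ.2.2 x).mpr (h hx)
    obtain ⟨y, hy, rfl⟩ := hx'
    exact ⟨y, ⟨hy, hx⟩, rfl⟩

/-- An empirical model on a bundle scenario `f : Γ → K`: a compatible family
of distributions on the fibers of `f`. -/
structure EmpiricalModel (R : Type t) [CommSemiring R] {Γ : SComplex V} {K : SComplex W}
    (f : Map Γ K) where
  dist : ∀ σ, σ ∈ K.faces → Dist R (f.fiber σ)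
  compat : ∀ σ (hσ : σ ∈ K.faces) σ' (hσ' : σ' ∈ K.faces) (h : σ' ⊆ σ),
    Dist.map (f.resFiber hσ' h) (dist σ hσ) = dist σ' hσ'

/-- An empirical model on a scenario `(K, O)`: a compatible family of
distributions on joint outcome assignments over each measurement context. -/
structure ScenEmp (R : Type t) [CommSemiring R] (K : SComplex V) (O : V → Type v) where
  dist : ∀ σ, σ ∈ K.faces → Dist R (∀ x : σ, O x.1)
  compat : ∀ σ (hσ : σ ∈ K.faces) σ' (hσ' : σ' ∈ K.faces) (h : σ' ⊆ σ),
    Dist.map (fun (s : ∀ x : σ, O x.1) (x : σ') => s ⟨x.1, h x.2⟩) (dist σ hσ) = dist σ' hσ'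

end SComplex

namespace SComplex

variable {V : Type u} {W : Type v} {V' : Type w}


/-- The defining property of the push-forward `π_* p` of an empirical model
`p` on `f` along a simplicial relation `π : K' → ĤN K` (a simplicial complex
map into the nerve complex): over a simplex `σ'` of `K'`, the value at a fiber
element `γ'` of the pulled-back bundle is the value of `p` over the union
`π̄(σ')` at the union of the first components of `γ'`. -/
def piPushSpec {Γ : SComplex V} {K : SComplex W} {K' : SComplex V'}
    (f : Map Γ K) (π : Map K' (nerveC K)) {R : Type t} [CommSemiring R]
    (p : EmpiricalModel R f) (q : EmpiricalModel R (pbSnd (nerveMap f) π)) : Prop :=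
  ∀ σ' (hσ' : σ' ∈ K'.faces) (γ' : (pbSnd (nerveMap f) π).fiber σ')
    (hu : (⋃ x' ∈ σ', ((π.toFun x' : K.Face) : Set W)) ∈ K.faces)
    (γ : f.fiber (⋃ x' ∈ σ', ((π.toFun x' : K.Face) : Set W))),
    (γ : Set V) = (⋃ r ∈ γ'.1, ((r.1.1 : Γ.Face) : Set V)) →
    (q.dist σ' hσ').1 γ' = (p.dist _ hu).1 γ

/-- The fiber element of the event bundle given by the graph of an outcome
assignment `s` over a simplex `σ`. -/
def graphFiber (K : SComplex V) (O : V → Type v) {σ : Set V} (hσ : σ ∈ K.faces)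
    (s : ∀ x : σ, O x.1) : (eventProj K O).fiber σ := by
  refine ⟨{p : (x : V) × O x | ∃ h : p.1 ∈ σ, p.2 = s ⟨p.1, h⟩}, ⟨?_, ?_⟩, ?_⟩
  · have h : Sigma.fst '' {p : (x : V) × O x | ∃ h : p.1 ∈ σ, p.2 = s ⟨p.1, h⟩} = σ := by
      ext x
      constructor
      · rintro ⟨p, ⟨hp, _⟩, rfl⟩; exact hp
      · intro hx; exact ⟨⟨x, s ⟨x, hx⟩⟩, ⟨hx, rfl⟩, rfl⟩
    exact Set.mem_of_eq_of_mem h hσ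
  · rintro ⟨x₁, o₁⟩ ⟨h₁, ho₁⟩ ⟨x₂, o₂⟩ ⟨h₂, ho₂⟩ hx
    obtain rfl : x₁ = x₂ := hx
    exact congrArg (Sigma.mk x₁) (ho₁.trans ho₂.symm)
  · ext x
    constructor
    · rintro ⟨p, ⟨hp, _⟩, rfl⟩; exact hp
    · intro hx; exact ⟨⟨x, s ⟨x, hx⟩⟩, ⟨hx, rfl⟩, rfl⟩

/-- Push-forward of a fiber element along a map over the base. -/
def pushFiber {Γ : SComplex V} {Γ' : SComplex V'} {K : SComplex W}
    (f : Map Γ K) (g : Map Γ' K) (α : Map Γ Γ') (hc : g.comp α = f) (σ : Set W)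
    (γ : f.fiber σ) : g.fiber σ := by
  refine ⟨α.toFun '' γ.1, α.map_faces γ.2.1, ?_⟩
  rw [← Set.image_comp]
  have h : g.toFun ∘ α.toFun = f.toFun := congrArg Map.toFun hc
  rw [h]
  exact γ.2.2

/-- Sections of a bundle scenario. -/
def BSection {Γ : SComplex V} {K : SComplex W} (f : Map Γ K) : Type _ :=
  {s : Map K Γ // f.comp s = Map.id K}

/-- Evaluation of a section of a bundle scenario at a simplex of the base,
giving an element of the fiber. -/
def BSection.ev {Γ : SComplex V} {K : SComplex W} (f : Map Γ K) (σ : Set W)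
    (hσ : σ ∈ K.faces) (s : BSection f) : f.fiber σ := by
  refine ⟨s.1.toFun '' σ, s.1.map_faces hσ, ?_⟩
  rw [← Set.image_comp]
  have h : f.toFun ∘ s.1.toFun = fun x => x := congrArg Map.toFun s.2
  rw [h, Set.image_id']

/-- Noncontextuality of an empirical model on a bundle scenario: it is a
mixture of deterministic models coming from sections. -/
def BundleNC (R : Type t) [CommSemiring R] {Γ : SComplex V} {K : SComplex W}
    (f : Map Γ K) (p : EmpiricalModel R f) : Prop :=
  ∃ d : Dist R (BSection f), ∀ σ (hσ : σ ∈ K.faces),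
    p.dist σ hσ = Dist.map (BSection.ev f σ hσ) d

/-- Noncontextuality of an empirical model on a scenario `(K, O)`: it is a
mixture of deterministic models coming from global outcome assignments. -/
def ScenNC (R : Type t) [CommSemiring R] (K : SComplex V) (O : V → Type v)
    (e : ScenEmp R K O) : Prop :=
  ∃ d : Dist R (∀ x : V, O x), ∀ σ (hσ : σ ∈ K.faces),
    e.dist σ hσ = Dist.map (fun (g : ∀ x : V, O x) (x : σ) => g x.1) d

end SComplex

end Ctx

namespace Ctx
open SComplex

/-! The subsimplices of a fiber element `γ` over `⋃ τ` lying over the members of `τ` form a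
fiber element of `ĤN f` over `τ` whose union is `γ`; pushing `p_{⋃ τ}` forward along this
injective lift gives `ĤN p`, and compatibility follows because the lift commutes with
restriction. Discreteness over vertices makes `f` injective on simplices, so every `κ` with
union `γ` is this lift, which gives the formula for `(ĤN p)_τ(κ)`. -/

theorem Dist.map_map {R U U' U'' : Type*} [CommSemiring R] (g : U' → U'') (h : U → U')
    (p : Dist R U) : Dist.map g (Dist.map h p) = Dist.map (g ∘ h) p :=
  Subtype.ext Finsupp.mapDomain_comp.symm

theorem Dist.map_apply_of_injective {R U U' : Type*} [CommSemiring R] {g : U → U'}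
    (hg : Function.Injective g) (p : Dist R U) (x : U) : (Dist.map g p).1 (g x) = p.1 x :=
  Finsupp.mapDomain_apply hg _ x

namespace SComplex

variable {V : Type u} {W : Type v} {Γ : SComplex V} {K : SComplex W} (f : Map Γ K)

theorem Map.DiscV.injOn (hd : f.DiscV) {γ : Set V} (hγ : γ ∈ Γ.faces) :
    Set.InjOn f.toFun γ := by
  intro x hx y hy hxy
  by_contra hne
  refine hd x y hne hxy (Γ.down_closed hγ ?_ ⟨x, Or.inl rfl⟩)
  rintro z (rfl | rfl)
  exacts [hx, hy]

variable {τ : Set K.Face}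

def liftFace (γ : f.fiber (⋃ σ ∈ τ, (σ : Set W))) (σ : τ) : Γ.Face :=
  ⟨γ.1 ∩ f.toFun ⁻¹' σ.1, (f.resFiber σ.1.2 (Set.subset_biUnion_of_mem σ.2) γ).2.1⟩

theorem nerveMap_liftFace (γ : f.fiber (⋃ σ ∈ τ, (σ : Set W))) (σ : τ) :
    (nerveMap f).toFun (liftFace f γ σ) = σ :=
  Subtype.ext (f.resFiber σ.1.2 (Set.subset_biUnion_of_mem σ.2) γ).2.2

theorem iUnion_range_liftFace (γ : f.fiber (⋃ σ ∈ τ, (σ : Set W))) :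
    ⋃ δ ∈ Set.range (liftFace f γ), (δ : Set V) = γ.1 := by
  have hγ : γ.1 ⊆ f.toFun ⁻¹' ⋃ σ ∈ τ, (σ : Set W) := Set.image_subset_iff.mp γ.2.2.subset
  calc ⋃ δ ∈ Set.range (liftFace f γ), (δ : Set V)
      = ⋃ σ : τ, γ.1 ∩ f.toFun ⁻¹' σ.1 := Set.biUnion_range
    _ = γ.1 ∩ f.toFun ⁻¹' ⋃ σ ∈ τ, (σ : Set W) := by
      rw [← Set.inter_iUnion, ← Set.preimage_iUnion]
      exact congrArg (fun s => γ.1 ∩ f.toFun ⁻¹' s) (Set.iUnion_coe_set _ _)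
    _ = γ.1 := Set.inter_eq_left.mpr hγ

theorem image_range_liftFace (γ : f.fiber (⋃ σ ∈ τ, (σ : Set W))) :
    (nerveMap f).toFun '' Set.range (liftFace f γ) = τ := by
  rw [← Set.range_comp, show (nerveMap f).toFun ∘ liftFace f γ = Subtype.val from
    funext (nerveMap_liftFace f γ), Subtype.range_coe]

def nerveLift (hτ : τ ∈ (nerveC K).faces) (γ : f.fiber (⋃ σ ∈ τ, (σ : Set W))) :
    (nerveMap f).fiber τ :=
  ⟨Set.range (liftFace f γ),
    ⟨haveI := hτ.1.to_subtype; Set.finite_range _,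
      haveI := hτ.2.1.to_subtype; Set.range_nonempty _,
      (iUnion_range_liftFace f γ).symm ▸ γ.2.1⟩,
    image_range_liftFace f γ⟩

theorem nerveLift_injective (hτ : τ ∈ (nerveC K).faces) :
    Function.Injective (nerveLift f hτ) := by
  intro γ₁ γ₂ h
  apply Subtype.ext
  rw [← iUnion_range_liftFace f γ₁, ← iUnion_range_liftFace f γ₂]
  exact congrArg (fun κ : (nerveMap f).fiber τ => ⋃ δ ∈ κ.1, (δ : Set V)) h

theorem liftFace_nerveMap (hd : f.DiscV) (κ : (nerveMap f).fiber τ)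
    (γ : f.fiber (⋃ σ ∈ τ, (σ : Set W))) (h : γ.1 = ⋃ δ ∈ κ.1, (δ : Set V))
    {δ : Γ.Face} (hδ : δ ∈ κ.1) :
    liftFace f γ ⟨(nerveMap f).toFun δ, κ.2.2 ▸ Set.mem_image_of_mem _ hδ⟩ = δ := by
  have hsub : (δ : Set V) ⊆ γ.1 := h ▸ Set.subset_biUnion_of_mem hδ
  exact Subtype.ext ((Set.inter_comm _ _).trans ((hd.injOn f γ.2.1).preimage_image_inter hsub))

theorem nerveLift_eq_of_iUnion_eq (hd : f.DiscV) (hτ : τ ∈ (nerveC K).faces)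
    (κ : (nerveMap f).fiber τ) (γ : f.fiber (⋃ σ ∈ τ, (σ : Set W)))
    (h : γ.1 = ⋃ δ ∈ κ.1, (δ : Set V)) : nerveLift f hτ γ = κ := by
  apply Subtype.ext
  ext δ
  constructor
  · rintro ⟨⟨σ, hσ⟩, rfl⟩
    obtain ⟨δ', hδ', rfl⟩ : σ ∈ (nerveMap f).toFun '' κ.1 := by rwa [κ.2.2]
    rw [liftFace_nerveMap f hd κ γ h hδ']
    exact hδ'
  · intro hδ
    exact ⟨_, liftFace_nerveMap f hd κ γ h hδ⟩

theorem liftFace_resFiber {τ' : Set K.Face} (hτ' : τ' ∈ (nerveC K).faces) (hsub : τ' ⊆ τ)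
    (γ : f.fiber (⋃ σ ∈ τ, (σ : Set W))) (σ : τ') :
    liftFace f (f.resFiber hτ'.2.2 (Set.biUnion_subset_biUnion_left hsub) γ) σ =
      liftFace f γ (Set.inclusion hsub σ) := by
  apply Subtype.ext
  change γ.1 ∩ f.toFun ⁻¹' (⋃ σ ∈ τ', (σ : Set W)) ∩ f.toFun ⁻¹' σ.1 = γ.1 ∩ f.toFun ⁻¹' σ.1
  rw [Set.inter_assoc, ← Set.preimage_inter,
    Set.inter_eq_right.mpr (Set.subset_biUnion_of_mem σ.2)]

theorem resFiber_nerveLift {τ' : Set K.Face} (hτ : τ ∈ (nerveC K).faces)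
    (hτ' : τ' ∈ (nerveC K).faces) (hsub : τ' ⊆ τ) (γ : f.fiber (⋃ σ ∈ τ, (σ : Set W))) :
    (nerveMap f).resFiber hτ' hsub (nerveLift f hτ γ) =
      nerveLift f hτ' (f.resFiber hτ'.2.2 (Set.biUnion_subset_biUnion_left hsub) γ) := by
  apply Subtype.ext
  ext δ
  change (δ ∈ Set.range (liftFace f γ) ∧ (nerveMap f).toFun δ ∈ τ') ↔ _
  constructor
  · rintro ⟨⟨σ, rfl⟩, hσ⟩
    rw [nerveMap_liftFace] at hσ
    exact ⟨⟨σ, hσ⟩, liftFace_resFiber f hτ' hsub γ _⟩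
  · rintro ⟨σ, rfl⟩
    rw [liftFace_resFiber f hτ' hsub γ σ, nerveMap_liftFace]
    exact ⟨⟨_, rfl⟩, σ.2⟩

noncomputable def EmpiricalModel.nerve {R : Type*} [CommSemiring R] (p : EmpiricalModel R f) :
    EmpiricalModel R (nerveMap f) where
  dist τ hτ := Dist.map (nerveLift f hτ) (p.dist _ hτ.2.2)
  compat τ hτ τ' hτ' hsub := by
    rw [Dist.map_map, ← p.compat _ hτ.2.2 _ hτ'.2.2 (Set.biUnion_subset_biUnion_left hsub),
      Dist.map_map]
    exact congrArg (Dist.map · _) (funext (resFiber_nerveLift f hτ hτ' hsub))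

end SComplex

theorem statement_8_general {V : Type u} {W : Type v} {Γ : SComplex V} {K : SComplex W}
    (f : Map Γ K) (hf : f.IsBundle)
    (R : Type t) [CommSemiring R]
    (p : EmpiricalModel R f) :
    ∃ q : EmpiricalModel R (nerveMap f),
      ∀ τ (hτ : τ ∈ (nerveC K).faces) (κ : (nerveMap f).fiber τ)
        (hu : (⋃ σ ∈ τ, (σ : Set W)) ∈ K.faces)
        (γ : f.fiber (⋃ σ ∈ τ, (σ : Set W))),
        (γ : Set V) = (⋃ δ ∈ (κ : Set Γ.Face), (δ : Set V)) →
        (q.dist τ hτ).1 κ = (p.dist _ hu).1 γ := by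
  refine ⟨p.nerve f, fun τ hτ κ _ γ hγ => ?_⟩
  rw [← nerveLift_eq_of_iUnion_eq f hf.2.2 hτ κ γ hγ]
  exact Dist.map_apply_of_injective (nerveLift_injective f hτ) _ γ

/-- `ĤN p` is a well-defined empirical model on `ĤN f`. -/
theorem statement_8 {V : Type u} {W : Type v} {Γ : SComplex V} {K : SComplex W}
    (f : Map Γ K) (hf : f.IsBundle)
    (R : Type t) [CommSemiring R] (hR : ∀ a b : R, a + b = 0 → a = 0 ∧ b = 0)
    (p : EmpiricalModel R f) :
    ∃ q : EmpiricalModel R (nerveMap f),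
      ∀ τ (hτ : τ ∈ (nerveC K).faces) (κ : (nerveMap f).fiber τ)
        (hu : (⋃ σ ∈ τ, (σ : Set W)) ∈ K.faces)
        (γ : f.fiber (⋃ σ ∈ τ, (σ : Set W))),
        (γ : Set V) = (⋃ δ ∈ (κ : Set Γ.Face), (δ : Set V)) →
        (q.dist τ hτ).1 κ = (p.dist _ hu).1 γ :=
  statement_8_general f hf R p

end Ctx
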